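/- Given reals p > 0, q, a, a′ and b > 0, b′ > 0, define h(ξ) = (−q + (ξ/2)·a′ + (1/(2ξ))·a) / (p + (ξ/2)·b′ + (1/(2ξ))·b) for ξ > 0, and set γ = p·a + q·b, γ′ = p·a′ + q·b′. If γ·γ′ ≤ 0 and (γ, γ′) ≠ (0, 0), then h has no stationary points on (0, ∞), i.e. the derivative h′(ξ) is nonzero for every ξ > 0. -/

import Mathlib

/-- The function `h(ξ) = (−q + (ξ/2)a′ + (1/(2ξ))a) / (p + (ξ/2)b′ + (1/(2ξ))b)`
whose maximization over the squeezing factor `ξ` is equivalent to the maximization of the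
teleportation fidelity `F(ξ,φ) = [det Γ^tr − h(ξ)]^(−1/2)`. -/
noncomputable def hfun (p q a a' b b' : ℝ) (ξ : ℝ) : ℝ :=
  (-q + (ξ/2) * a' + (1/(2*ξ)) * a) / (p + (ξ/2) * b' + (1/(2*ξ)) * b)

/-- Appendix B: if `γ γ′ ≤ 0` and `(γ, γ′) ≠ (0,0)`, then `h` has no stationary points
on `(0,∞)` (the global extrema are only at the border `ξ → 0` or `ξ → +∞`). -/
theorem no_stationary_points (p q a a' b b' : ℝ)
    (hp : 0 < p) (hb : 0 < b) (hb' : 0 < b')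
    (hprod : (p * a + q * b) * (p * a' + q * b') ≤ 0)
    (hne : ¬(p * a + q * b = 0 ∧ p * a' + q * b' = 0)) :
    ∀ ξ > 0, deriv (hfun p q a a' b b') ξ ≠ 0 := by
  intro ξ hξ hder
  have hξne : ξ ≠ 0 := ne_of_gt hξ
  have h2ξ : (2:ℝ) * ξ ≠ 0 := by positivity
  -- derivative of numerator
  have hNa : HasDerivAt (fun x : ℝ => 1/(2*x) * a) (-2/(2*ξ)^2 * a) ξ := by
    have := (((hasDerivAt_id ξ).const_mul 2).inv h2ξ).mul_const a
    simpa [one_div] using this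
  have hN : HasDerivAt (fun x : ℝ => -q + x/2 * a' + 1/(2*x) * a)
      (1/2 * a' + -2/(2*ξ)^2 * a) ξ :=
    ((((hasDerivAt_id ξ).div_const 2).mul_const a').const_add (-q)).add hNa
  have hDb : HasDerivAt (fun x : ℝ => 1/(2*x) * b) (-2/(2*ξ)^2 * b) ξ := by
    have := (((hasDerivAt_id ξ).const_mul 2).inv h2ξ).mul_const b
    simpa [one_div] using this
  have hD : HasDerivAt (fun x : ℝ => p + x/2 * b' + 1/(2*x) * b)
      (1/2 * b' + -2/(2*ξ)^2 * b) ξ :=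
    ((((hasDerivAt_id ξ).div_const 2).mul_const b').const_add p).add hDb
  have hDpos : 0 < p + ξ/2 * b' + 1/(2*ξ) * b := by positivity
  have hDne : p + ξ/2 * b' + 1/(2*ξ) * b ≠ 0 := ne_of_gt hDpos
  have hdiv := hN.div hD hDne
  have hderiv : deriv (fun x : ℝ => (-q + x/2 * a' + 1/(2*x) * a) / (p + x/2 * b' + 1/(2*x) * b)) ξ = _ := hdiv.deriv
  unfold hfun at hder
  rw [hder] at hderiv
  -- numerator of the derivative vanishes
  have hnum : (1/2 * a' + -2/(2*ξ)^2 * a) * (p + ξ/2 * b' + 1/(2*ξ) * b)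
      - (-q + ξ/2 * a' + 1/(2*ξ) * a) * (1/2 * b' + -2/(2*ξ)^2 * b) = 0 := by
    have h := hderiv.symm
    rw [div_eq_zero_iff] at h
    rcases h with h | h
    · exact h
    · exact absurd h (pow_ne_zero 2 hDne)
  set G := p * a + q * b with hGdef
  set G' := p * a' + q * b' with hG'def
  have key : G' * ξ * (p * ξ + b) - G * (b' * ξ + p) = 0 := by
    field_simp at hnum
    have key4 : (G' * ξ * (p * ξ + b) - G * (b' * ξ + p)) * (512 * ξ ^ 4) = 0 := by
      rw [hGdef, hG'def]
      linear_combination (256 * p * ξ ^ 3) * hnum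
    rcases mul_eq_zero.mp key4 with h | h
    · linarith
    · exact absurd h (by positivity)
  have hpos1 : 0 < ξ * (p * ξ + b) := by positivity
  have hpos2 : 0 < b' * ξ + p := by positivity
  have h1 : G * G' * (ξ * (p * ξ + b)) ≤ 0 :=
    mul_nonpos_of_nonpos_of_nonneg hprod hpos1.le
  have h2 : G ^ 2 * (b' * ξ + p) = G * G' * (ξ * (p * ξ + b)) := by
    linear_combination (-G) * key
  have hG2 : G ^ 2 ≤ 0 := by nlinarith
  have hG : G = 0 := by nlinarith [sq_nonneg G]
  have hG' : G' = 0 := by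
    have : G' * ξ * (p * ξ + b) = 0 := by rw [hG] at key; linarith
    have := mul_eq_zero.mp this
    rcases this with h | h
    · rcases mul_eq_zero.mp h with h | h
      · exact h
      · exact absurd h hξne
    · exact absurd h (by positivity)
  exact hne ⟨hG, hG'⟩
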